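/- For each linear context-free grammar G there exists a grammar G_k in linear-Dyck normal form such that L(G) = L(G_k); conversely, every grammar in linear-Dyck normal form generates a linear language. -/

import Mathlib

/-!
The words a grammar derives from its nonterminals form the least family of languages closed under
its rules (`derivesLang_le`), so every inclusion between two languages below is proved by
exhibiting a closed family.

From linear-Dyck normal form to a linear grammar: in a rule `X → AB` one of `A`, `B` has a terminal
rule `→ t`, which by the Dyck conditions is its only rule; substituting it gives `X → tB` or
`X → At`.

From a linear grammar to linear-Dyck normal form: erasing nullable nonterminals turns the rules into
`λ`-free productions `X → t`, `t₁t₂`, `tY`, `Yt`, `t₁Yt₂`. An occurrence of `X` to be rewritten by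
such a production `p`, whose nonterminal `Y` is in turn to be rewritten by `c`, is simulated by a
bracket pair `[_(p,c) ]_(p,c)`: one bracket rewrites to a terminal of `p`, the other stands for `Y`
and is rewritten as `c` dictates (`t₁Yt₂` needs a second, inner pair for `Yt₂`). As both brackets
carry the key `(p, c)`, each bracket determines its partner and its side, and a bracket standing
for a terminal has no other rule.
-/

namespace CS

/-! ### Brackets and Dyck languages -/

/-- A bracket over `k` letters: `(i, true)` is the left bracket `[ᵢ` and
`(i, false)` is the right bracket `]ᵢ`. -/
abbrev Bracket (k : ℕ) : Type := Fin k × Bool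

/-- The one-sided Dyck language `D_k` over `k` letters, i.e. the language generated by the
context-free grammar with rules `S → [ᵢ S ]ᵢ`, `S → SS`, `S → [ᵢ ]ᵢ` for `1 ≤ i ≤ k`. -/
inductive IsDyck {k : ℕ} : List (Bracket k) → Prop
  | pair (i : Fin k) : IsDyck [(i, true), (i, false)]
  | wrap (i : Fin k) {w : List (Bracket k)} (hw : IsDyck w) :
      IsDyck ((i, true) :: w ++ [(i, false)])
  | concat {u v : List (Bracket k)} (hu : IsDyck u) (hv : IsDyck v) : IsDyck (u ++ v)

/-- The number of left (open) brackets in `w`. -/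
def opens {k : ℕ} (w : List (Bracket k)) : ℕ := (w.filter fun b => b.2).length

/-- The number of right (close) brackets in `w`. -/
def closes {k : ℕ} (w : List (Bracket k)) : ℕ := (w.filter fun b => !b.2).length

/-- A string is balanced if it has as many left brackets as right brackets and every prefix
has at least as many left brackets as right brackets.  (This is the balancedness of the image
of the string under the homomorphism `h` sending every `[ᵢ` to `[₁` and every `]ᵢ` to `]₁`.) -/
def IsBalanced {k : ℕ} (w : List (Bracket k)) : Prop :=
  opens w = closes w ∧ ∀ p : List (Bracket k), p <+: w → closes p ≤ opens p

/-- The substring `w_{i:j}` of `w` starting at the `i`-th position and ending at the `j`-th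
position (1-indexed, inclusive). -/
def substr {α : Type*} (w : List α) (i j : ℕ) : List α := (w.drop (i - 1)).take (j - i + 1)

/-- `(i, j)` is a matched pair of `w` if `1 ≤ i ≤ j ≤ |w|` and `h(w_{i:j})` is balanced. -/
def MatchedPair {k : ℕ} (w : List (Bracket k)) (i j : ℕ) : Prop :=
  1 ≤ i ∧ i ≤ j ∧ j ≤ w.length ∧ IsBalanced (substr w i j)

/-- `(i, j)` is a nested pair of `w` if it is a matched pair and either `j = i + 1` or
`(i + 1, j - 1)` is a matched pair. -/
def NestedPair {k : ℕ} (w : List (Bracket k)) (i j : ℕ) : Prop :=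
  MatchedPair w i j ∧ (j = i + 1 ∨ MatchedPair w (i + 1) (j - 1))

/-- The homomorphism `h_{k'}` keeping only the brackets indexed by `k'` (sent to `[₁`/`]₁`)
and erasing all other brackets. -/
def projIdx {k : ℕ} (i : Fin k) (w : List (Bracket k)) : List (Bracket 1) :=
  (w.filter fun b => decide (b.1 = i)).map fun b => ((0 : Fin 1), b.2)

/-! ### Grammars: Chomsky and Dyck normal forms -/

variable {T : Type}

/-- Chomsky normal form: every rule has the form `A → BC` or `A → a`, except possibly
`S → λ`, and the initial nonterminal never occurs on the right-hand side of a rule. -/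
def IsChomskyNF (g : ContextFreeGrammar T) : Prop :=
  (∀ r ∈ g.rules,
      (∃ B C : g.NT, r.output = [Symbol.nonterminal B, Symbol.nonterminal C]) ∨
      (∃ a : T, r.output = [Symbol.terminal a]) ∨
      (r.input = g.initial ∧ r.output = [])) ∧
  (∀ r ∈ g.rules, Symbol.nonterminal g.initial ∉ r.output)

/-- Dyck normal form (Definition 1.1):
(1) Chomsky normal form;
(2) if `A → a` with `A ≠ S` then no other rule rewrites `A`;
(3) if some rule `X → AB` is in `P` then no rule of the form `X' → B'A` is in `P`
    (equivalently, no nonterminal occurs both as a left member and as a right member of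
    right-hand sides of two-nonterminal rules);
(4) for rules `X → AB` and `X' → A'B` one has `A = A'`, and for rules `X → AB` and
    `X' → AB'` one has `B = B'`. -/
def IsDyckNF (g : ContextFreeGrammar T) : Prop :=
  IsChomskyNF g ∧
  (∀ r ∈ g.rules, ∀ a : T, r.output = [Symbol.terminal a] → r.input ≠ g.initial →
      ∀ r' ∈ g.rules, r'.input = r.input → r' = r) ∧
  (∀ r ∈ g.rules, ∀ r' ∈ g.rules, ∀ A B B' : g.NT,
      r.output = [Symbol.nonterminal A, Symbol.nonterminal B] →
      r'.output ≠ [Symbol.nonterminal B', Symbol.nonterminal A]) ∧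
  (∀ r ∈ g.rules, ∀ r' ∈ g.rules, ∀ A A' B B' : g.NT,
      r.output = [Symbol.nonterminal A, Symbol.nonterminal B] →
      r'.output = [Symbol.nonterminal A', Symbol.nonterminal B'] →
      (B = B' → A = A') ∧ (A = A' → B = B'))

/-- Extension of a map on nonterminals to a map on symbols, acting as the identity on
terminal symbols. -/
def mapSym {N N' : Type*} (f : N → N') : Symbol T N → Symbol T N'
  | .terminal t => .terminal t
  | .nonterminal A => .nonterminal (f A)

/-- One leftmost derivation step rewriting the (leftmost) nonterminal `A`:
everything to the left of the rewritten occurrence of `A` is terminal. -/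
def LeftmostStep (g : ContextFreeGrammar T) (u v : List (Symbol T g.NT)) (A : g.NT) : Prop :=
  ∃ r ∈ g.rules, r.input = A ∧ ∃ (p : List T) (s : List (Symbol T g.NT)),
    u = p.map Symbol.terminal ++ Symbol.nonterminal A :: s ∧
    v = p.map Symbol.terminal ++ r.output ++ s

/-- One leftmost derivation step. -/
def LeftmostProduces (g : ContextFreeGrammar T) (u v : List (Symbol T g.NT)) : Prop :=
  ∃ A : g.NT, LeftmostStep g u v A

/-- `LmTrace g u v l` : there is a leftmost derivation in `g` from `u` to `v` whose
consecutively rewritten nonterminals are listed (in order) in `l`. -/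
inductive LmTrace (g : ContextFreeGrammar T) :
    List (Symbol T g.NT) → List (Symbol T g.NT) → List g.NT → Prop
  | refl (u : List (Symbol T g.NT)) : LmTrace g u u []
  | tail {u v w : List (Symbol T g.NT)} {l : List g.NT} {A : g.NT}
      (huv : LmTrace g u v l) (hvw : LeftmostStep g v w A) : LmTrace g u w (l ++ [A])

/-- `t` is the trace-word of the terminal word `w` associated with some leftmost derivation of
`w` in `g`: the concatenation of the nonterminals consecutively rewritten in the derivation,
excluding the axiom (which is the first rewritten nonterminal).  Trace-words are only
associated with derivations `S ⇒ u₁ ⇒ ⋯ ⇒ u_{2n-1} = w` with `n ≥ 2`, i.e. `t ≠ []`. -/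
def IsTraceWord (g : ContextFreeGrammar T) (w : List T) (t : List g.NT) : Prop :=
  t ≠ [] ∧ LmTrace g [Symbol.nonterminal g.initial] (w.map Symbol.terminal) (g.initial :: t)

/-- `A` is rewritten by a terminal rule `A → t` (i.e. `φ(A) ∈ T`). -/
def RewritesToTerminal (g : ContextFreeGrammar T) (A : g.NT) : Prop :=
  ∃ r ∈ g.rules, r.input = A ∧ ∃ t : T, r.output = [Symbol.terminal t]

/-- The rule `A → a` belongs to the grammar. -/
def TerminalRule (g : ContextFreeGrammar T) (A : g.NT) (a : T) : Prop :=
  ∃ r ∈ g.rules, r.input = A ∧ r.output = [Symbol.terminal a]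

/-- Linear grammar: all rules are of the forms `X → λ`, `X → t`, `X → tY`, `X → Yt`,
`X → t₁Yt₂`. -/
def IsLinear (g : ContextFreeGrammar T) : Prop :=
  ∀ r ∈ g.rules,
    r.output = [] ∨
    (∃ t : T, r.output = [Symbol.terminal t]) ∨
    (∃ (t : T) (Y : g.NT), r.output = [Symbol.terminal t, Symbol.nonterminal Y]) ∨
    (∃ (t : T) (Y : g.NT), r.output = [Symbol.nonterminal Y, Symbol.terminal t]) ∨
    (∃ (t₁ t₂ : T) (Y : g.NT),
      r.output = [Symbol.terminal t₁, Symbol.nonterminal Y, Symbol.terminal t₂])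

/-- Linear-Dyck normal form: Dyck normal form with `N⁽³⁾ = ∅`, i.e. in every
two-nonterminal rule `X → AB` at least one of `A`, `B` is rewritten by a terminal rule. -/
def IsLinearDyckNF (g : ContextFreeGrammar T) : Prop :=
  IsDyckNF g ∧
  ∀ r ∈ g.rules, ∀ A B : g.NT,
    r.output = [Symbol.nonterminal A, Symbol.nonterminal B] →
    (RewritesToTerminal g A ∨ RewritesToTerminal g B)

/-- `(A, B)` is a pairwise pair of brackets in `N⁽¹⁾`: it occurs as the right-hand side of a
two-nonterminal rule and both members are rewritten by terminal rules. -/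
def IsN1Pair (g : ContextFreeGrammar T) (A B : g.NT) : Prop :=
  (∃ r ∈ g.rules, r.output = [Symbol.nonterminal A, Symbol.nonterminal B]) ∧
  RewritesToTerminal g A ∧ RewritesToTerminal g B

/-- `C` is a bracket of some pair in `N⁽¹⁾`. -/
def IsN1Bracket (g : ContextFreeGrammar T) (C : g.NT) : Prop :=
  ∃ A B : g.NT, IsN1Pair g A B ∧ (C = A ∨ C = B)

/-- The grammar over terminals `T` whose nonterminals are the axiom `S` (`none`) together
with the `2k` brackets `[₁, …, [ₖ, ]₁, …, ]ₖ`, with the given rules. -/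
abbrev bracketGrammar (k : ℕ) (rs : Finset (ContextFreeRule T (Option (Bracket k)))) :
    ContextFreeGrammar T :=
  ⟨Option (Bracket k), none, rs⟩

section FormLanguages

variable {N : Type*}

def symbolLang (D : N → Language T) : Symbol T N → Language T
  | .terminal t => {[t]}
  | .nonterminal A => D A

def formLang (D : N → Language T) (α : List (Symbol T N)) : Language T :=
  (α.map (symbolLang D)).prod

lemma language_le_iff {l m : Language T} : l ≤ m ↔ ∀ w ∈ l, w ∈ m := Iff.rfl

@[simp] lemma mem_singleton_language {u w : List T} : w ∈ ({u} : Language T) ↔ w = u := Iff.rfl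

lemma singleton_mul_singleton (u v : List T) : ({u} * {v} : Language T) = {u ++ v} := by
  ext w
  simp [Language.mem_mul, eq_comm]

variable {D : N → Language T}

@[simp] lemma symbolLang_terminal (t : T) : symbolLang D (.terminal t) = {[t]} := rfl

@[simp] lemma symbolLang_nonterminal (A : N) : symbolLang D (.nonterminal A) = D A := rfl

@[simp] lemma formLang_nil : formLang D [] = 1 := rfl

@[simp] lemma formLang_cons (s : Symbol T N) (α : List (Symbol T N)) :
    formLang D (s :: α) = symbolLang D s * formLang D α :=
  List.prod_cons

@[simp] lemma formLang_append (α β : List (Symbol T N)) :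
    formLang D (α ++ β) = formLang D α * formLang D β := by
  simp [formLang]

@[simp] lemma formLang_map_terminal (w : List T) : formLang D (w.map Symbol.terminal) = {w} := by
  induction w with
  | nil => rfl
  | cons t w ih => simp [ih, singleton_mul_singleton]

end FormLanguages

section LeastClosedFamily

variable (g : ContextFreeGrammar T)

def derivesLang (A : g.NT) : Language T := {w | g.Derives [.nonterminal A] (w.map .terminal)}

def RulesClosed (D : g.NT → Language T) : Prop :=
  ∀ r ∈ g.rules, formLang D r.output ≤ D r.input

variable {g}

lemma mem_formLang_of_derives {D : g.NT → Language T} (hD : RulesClosed g D)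
    {α : List (Symbol T g.NT)} {w : List T} (h : g.Derives α (w.map .terminal)) :
    w ∈ formLang D α := by
  induction h using Relation.ReflTransGen.head_induction_on with
  | refl => simp
  | head hstep _ ih =>
    obtain ⟨r, hr, hrw⟩ := hstep
    obtain ⟨p, q, rfl, rfl⟩ := hrw.exists_parts
    simp only [formLang_append] at ih ⊢
    have hA : formLang D r.output ≤ formLang D [.nonterminal r.input] := by
      simpa using hD r hr
    exact mul_le_mul' (mul_le_mul' le_rfl hA) le_rfl ih

lemma derivesLang_le (D : g.NT → Language T) (hD : RulesClosed g D) (A : g.NT) :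
    derivesLang g A ≤ D A :=
  language_le_iff.mpr fun _ h => by simpa using mem_formLang_of_derives hD h

lemma derives_of_mem_formLang {α : List (Symbol T g.NT)} {w : List T}
    (h : w ∈ formLang (derivesLang g) α) : g.Derives α (w.map .terminal) := by
  induction α generalizing w with
  | nil =>
    obtain rfl : w = [] := h
    rfl
  | cons s α ih =>
    obtain ⟨u, hu, v, hv, rfl⟩ := Language.mem_mul.mp h
    have hs : g.Derives [s] (u.map .terminal) := by
      cases s with
      | terminal t =>
        obtain rfl : u = [t] := hu
        rfl
      | nonterminal A => exact hu
    simpa using (hs.append_right α).trans ((ih hv).append_left (u.map .terminal))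

lemma rulesClosed_derivesLang : RulesClosed g (derivesLang g) := fun r hr _ hw =>
  (ContextFreeGrammar.Produces.single ⟨r, hr, .input_output⟩).trans (derives_of_mem_formLang hw)

lemma formLang_derivesLang_anti {α β : List (Symbol T g.NT)} (h : g.Derives α β) :
    formLang (derivesLang g) β ≤ formLang (derivesLang g) α := fun _ hw =>
  mem_formLang_of_derives rulesClosed_derivesLang (h.trans (derives_of_mem_formLang hw))

open Classical in
lemma derivesLang_le_singleton {A : g.NT} {t : T}
    (h : ∀ r ∈ g.rules, r.input = A → r.output = [.terminal t]) :
    derivesLang g A ≤ {[t]} := by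
  refine (derivesLang_le (fun B => if B = A then {[t]} else ⊤) ?_ A).trans (by simp)
  intro r hr
  by_cases hA : r.input = A
  · simp [hA, h r hr hA]
  · simp [hA]

end LeastClosedFamily

section Linearize

variable (g : ContextFreeGrammar T)

def linearRules : Set (ContextFreeRule T g.NT) :=
  {r | r ∈ g.rules ∧ ∀ A B : g.NT, r.output ≠ [.nonterminal A, .nonterminal B]} ∪
  {r | ∃ A B t, ⟨r.input, [.nonterminal A, .nonterminal B]⟩ ∈ g.rules ∧
    (⟨A, [.terminal t]⟩ ∈ g.rules ∧ r.output = [.terminal t, .nonterminal B] ∨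
      ⟨B, [.terminal t]⟩ ∈ g.rules ∧ r.output = [.nonterminal A, .terminal t])}

lemma linearRules_finite : (linearRules g).Finite := by
  have hP := g.rules.finite_toSet
  refine (hP.union
    (((hP.prod hP).image fun rs => ⟨rs.1.input, rs.2.output ++ rs.1.output.drop 1⟩).union
      ((hP.prod hP).image fun rs => ⟨rs.1.input, rs.1.output.take 1 ++ rs.2.output⟩))).subset ?_
  rintro r (⟨hr, -⟩ | ⟨A, B, t, hr, ⟨hs, ho⟩ | ⟨hs, ho⟩⟩)
  · exact Or.inl hr
  · exact Or.inr (Or.inl ⟨(_, _), ⟨hr, hs⟩, by ext <;> simp [ho]⟩)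
  · exact Or.inr (Or.inr ⟨(_, _), ⟨hr, hs⟩, by ext <;> simp [ho]⟩)

noncomputable abbrev linearize : ContextFreeGrammar T :=
  ⟨g.NT, g.initial, (linearRules_finite g).toFinset⟩

variable {g}

lemma mem_linearize_rules {r : ContextFreeRule T g.NT} :
    r ∈ (linearize g).rules ↔ r ∈ linearRules g :=
  Set.Finite.mem_toFinset _

lemma linearize_isLinear (hg : IsChomskyNF g) : IsLinear (linearize g) := by
  intro r hr
  rcases mem_linearize_rules.mp hr with ⟨hr, hbin⟩ | ⟨A, B, t, -, ⟨-, ho⟩ | ⟨-, ho⟩⟩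
  · rcases hg.1 r hr with ⟨A, B, ho⟩ | ⟨a, ho⟩ | ⟨-, ho⟩
    · exact absurd ho (hbin A B)
    · exact Or.inr (Or.inl ⟨a, ho⟩)
    · exact Or.inl ho
  · exact Or.inr (Or.inr (Or.inl ⟨t, B, ho⟩))
  · exact Or.inr (Or.inr (Or.inr (Or.inl ⟨t, A, ho⟩)))

lemma derives_of_mem_linearRules {r : ContextFreeRule T g.NT} (hr : r ∈ linearRules g) :
    g.Derives [.nonterminal r.input] r.output := by
  rcases hr with ⟨hr, -⟩ | ⟨A, B, t, hr, ⟨hs, ho⟩ | ⟨hs, ho⟩⟩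
  · exact .single ⟨r, hr, .input_output⟩
  · rw [ho]
    exact .tail (.single ⟨_, hr, .input_output⟩) ⟨_, hs, .head _⟩
  · rw [ho]
    exact .tail (.single ⟨_, hr, .input_output⟩) ⟨_, hs, .cons _ (.head [])⟩

lemma IsDyckNF.derivesLang_le_of_rewritesToTerminal (hg : IsDyckNF g)
    {r : ContextFreeRule T g.NT} (hr : r ∈ g.rules) {A : g.NT} (hA : .nonterminal A ∈ r.output)
    (hT : RewritesToTerminal g A) :
    ∃ a, ⟨A, [.terminal a]⟩ ∈ g.rules ∧ derivesLang g A ≤ {[a]} := by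
  obtain ⟨s, hs, rfl, a, ha⟩ := hT
  have hinit : s.input ≠ g.initial := fun h => hg.1.2 r hr (h ▸ hA)
  refine ⟨a, by rwa [← ha], derivesLang_le_singleton fun r' hr' hin => ?_⟩
  rw [hg.2.1 s hs a ha hinit r' hr' hin, ha]

lemma rulesClosed_linearize_derivesLang : RulesClosed (linearize g) (derivesLang g) := fun r hr =>
  (formLang_derivesLang_anti (derives_of_mem_linearRules (mem_linearize_rules.mp hr))).trans
    (by simp)

lemma rulesClosed_derivesLang_linearize (hg : IsLinearDyckNF g) :
    RulesClosed g (derivesLang (linearize g)) := by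
  have hlin : ∀ r ∈ linearRules g, ∀ w ∈ formLang (derivesLang (linearize g)) r.output,
      w ∈ derivesLang (linearize g) r.input := fun r hr =>
    rulesClosed_derivesLang (g := linearize g) r (mem_linearize_rules.mpr hr)
  intro r hr w hw
  by_cases hbin : ∃ A B, r.output = [.nonterminal A, .nonterminal B]
  swap
  · exact hlin r (Or.inl ⟨hr, fun A B h => hbin ⟨A, B, h⟩⟩) w hw
  obtain ⟨A, B, ho⟩ := hbin
  rw [ho, formLang_cons, formLang_cons, formLang_nil, mul_one] at hw
  obtain ⟨u, hu, v, hv, rfl⟩ := Language.mem_mul.mp hw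
  have hrAB : ⟨r.input, [.nonterminal A, .nonterminal B]⟩ ∈ g.rules := by rwa [← ho]
  rcases hg.2 r hr A B ho with hA | hB
  · obtain ⟨a, ha, hle⟩ := hg.1.derivesLang_le_of_rewritesToTerminal hr (by simp [ho]) hA
    obtain rfl : u = [a] := hle (derivesLang_le _ rulesClosed_linearize_derivesLang A hu)
    exact hlin ⟨r.input, [.terminal a, .nonterminal B]⟩ (Or.inr ⟨A, B, a, hrAB, Or.inl ⟨ha, rfl⟩⟩)
      _ (by simpa using Language.append_mem_mul (l := {[a]}) rfl hv)
  · obtain ⟨b, hb, hle⟩ := hg.1.derivesLang_le_of_rewritesToTerminal hr (by simp [ho]) hB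
    obtain rfl : v = [b] := hle (derivesLang_le _ rulesClosed_linearize_derivesLang B hv)
    exact hlin ⟨r.input, [.nonterminal A, .terminal b]⟩ (Or.inr ⟨A, B, b, hrAB, Or.inr ⟨hb, rfl⟩⟩)
      _ (by simpa using Language.append_mem_mul (m := {[b]}) hu rfl)

lemma linearize_language (hg : IsLinearDyckNF g) : (linearize g).language = g.language := by
  ext w
  exact ⟨fun h => derivesLang_le _ rulesClosed_linearize_derivesLang _ h,
    fun h => derivesLang_le _ (rulesClosed_derivesLang_linearize hg) _ h⟩

end Linearize

inductive LinRHS (N T : Type) : Type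
  | term (t : T)
  | pair (t₁ t₂ : T)
  | left (t : T) (Y : N)
  | right (Y : N) (t : T)
  | both (t₁ : T) (Y : N) (t₂ : T)

namespace LinRHS

variable {N : Type}

def toForm : LinRHS N T → List (Symbol T N)
  | term t => [.terminal t]
  | pair t₁ t₂ => [.terminal t₁, .terminal t₂]
  | left t Y => [.terminal t, .nonterminal Y]
  | right Y t => [.nonterminal Y, .terminal t]
  | both t₁ Y t₂ => [.terminal t₁, .nonterminal Y, .terminal t₂]

def target : LinRHS N T → Option N
  | term _ | pair _ _ => none
  | left _ Y | right Y _ | both _ Y _ => some Y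

lemma toForm_injective : Function.Injective (toForm : LinRHS N T → List (Symbol T N)) := by
  intro s s' h
  cases s <;> cases s' <;> simp_all [toForm]

/-- The part of `s.toForm` that the left (`b = true`) or right (`b = false`) bracket of the outer
(`i = false`) or inner (`i = true`) bracket pair of `s` stands for: the outer pair splits
`s.toForm` in two, and for `both t₁ Y t₂` the inner pair splits the right half `Y t₂` again. -/
def bracketForm : LinRHS N T → Bool → Bool → List (Symbol T N)
  | pair t _, false, true | left t _, false, true | both t _ _, false, true => [.terminal t]
  | pair _ t, false, false | right _ t, false, false | both _ _ t, true, false => [.terminal t]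
  | left _ Y, false, false | right Y _, false, true | both _ Y _, true, true => [.nonterminal Y]
  | both _ Y t, false, false => [.nonterminal Y, .terminal t]
  | _, _, _ => []

lemma bracketForm_append_outer {s : LinRHS N T} (hs : ∀ t, s ≠ term t) :
    s.bracketForm false true ++ s.bracketForm false false = s.toForm := by
  cases s <;> simp_all [bracketForm, toForm]

lemma bracketForm_outer_ne_nil {s : LinRHS N T} (hs : ∀ t, s ≠ term t) (b : Bool) :
    s.bracketForm false b ≠ [] := by
  cases s <;> cases b <;> simp_all [bracketForm]

lemma exists_bracketForm_outer_eq_terminal {s : LinRHS N T} (hs : ∀ t, s ≠ term t) :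
    ∃ b t, s.bracketForm false b = [.terminal t] := by
  cases s <;> simp_all [bracketForm]

lemma bracketForm_inner {s : LinRHS N T} {i b : Bool} {Y : N} {t : T}
    (h : s.bracketForm i b = [.nonterminal Y, .terminal t]) :
    s.bracketForm true true = [.nonterminal Y] ∧ s.bracketForm true false = [.terminal t] := by
  cases s <;> cases i <;> cases b <;> simp_all [bracketForm]

lemma bracketForm_cases (s : LinRHS N T) (i b : Bool) :
    s.bracketForm i b = [] ∨ (∃ t, s.bracketForm i b = [.terminal t]) ∨
      (∃ Y, s.bracketForm i b = [.nonterminal Y]) ∨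
      ∃ Y t, s.bracketForm i b = [.nonterminal Y, .terminal t] := by
  cases s <;> cases i <;> cases b <;> simp [bracketForm]

end LinRHS

section DyckGrammar

variable (G : ContextFreeGrammar T)

/-- The productions `X → s` obtained from a rule `X → α` of `G` by erasing nonterminals of `α` that
derive `λ`; the sublist condition only serves to make this set finite. -/
def linProds : Set (G.NT × LinRHS G.NT T) :=
  {p | ∃ r ∈ G.rules, r.input = p.1 ∧ p.2.toForm.Sublist r.output ∧ G.Derives r.output p.2.toForm}

lemma linProds_finite : (linProds G).Finite := by
  have hfin : (⋃ r ∈ G.rules,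
      (r.input, ·) '' {α : List (Symbol T G.NT) | α.Sublist r.output}).Finite :=
    G.rules.finite_toSet.biUnion fun r _ =>
      (r.output.sublists.finite_toSet.subset fun α hα => List.mem_sublists.mpr hα).image _
  refine (hfin.preimage (Function.injective_id.prodMap LinRHS.toForm_injective).injOn).subset ?_
  rintro ⟨X, s⟩ ⟨r, hr, rfl, hsub, -⟩
  exact Set.mem_biUnion hr ⟨_, hsub, rfl⟩

abbrev LinProd : Type := ↥(linProds G)

instance : Finite (LinProd G) := (linProds_finite G).to_subtype

/-- A key `(p, c, i)` names a bracket pair: the outer (`i = false`) or inner (`i = true`) pair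
simulating the production `p`, where `c` is the production that will rewrite the nonterminal
of `p` (`none` if it has none).  The nonterminals of the simulating grammar are the axiom `none`
and the brackets `some (κ, true)` (left) and `some (κ, false)` (right). -/
abbrev Key : Type := LinProd G × Option (LinProd G) × Bool

abbrev DyckNT : Type := Option (Key G × Bool)

variable {G}

lemma mem_linProds {r : ContextFreeRule T G.NT} (hr : r ∈ G.rules) {s : LinRHS G.NT T}
    (hsub : s.toForm.Sublist r.output) (hd : G.Derives r.output s.toForm) :
    (r.input, s) ∈ linProds G :=
  ⟨r, hr, rfl, hsub, hd⟩

lemma mem_linProds_of_output {r : ContextFreeRule T G.NT} (hr : r ∈ G.rules)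
    {s : LinRHS G.NT T} (ho : r.output = s.toForm) : (r.input, s) ∈ linProds G :=
  mem_linProds hr (ho ▸ .refl _) (ho ▸ .refl _)

lemma mem_linProds_of_erase {r : ContextFreeRule T G.NT} (hr : r ∈ G.rules)
    {u v : List (Symbol T G.NT)} {Y : G.NT} (ho : r.output = u ++ [.nonterminal Y] ++ v)
    (hY : ⟨Y, []⟩ ∈ G.rules) {s : LinRHS G.NT T} (hs : s.toForm = u ++ v) :
    (r.input, s) ∈ linProds G := by
  refine mem_linProds hr (by rw [ho, hs]; exact (List.sublist_append_left u _).append (.refl v)) ?_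
  rw [ho, hs]
  exact .single ⟨_, hY, by simpa using ContextFreeRule.rewrites_of_exists_parts ⟨Y, []⟩ u v⟩

lemma LinProd.derives (p : LinProd G) : G.Derives [.nonterminal p.1.1] p.1.2.toForm := by
  obtain ⟨r, hr, hin, -, hd⟩ := p.2
  exact .head ⟨r, hr, hin ▸ .input_output⟩ hd

def Continues (p : LinProd G) (c : Option (LinProd G)) : Prop :=
  c.map (·.1.1) = p.1.2.target

def bracketPair (κ : Key G) : List (Symbol T (DyckNT G)) :=
  [.nonterminal (some (κ, true)), .nonterminal (some (κ, false))]

def prodOutputs (p : LinProd G) : Set (List (Symbol T (DyckNT G))) :=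
  match p.1.2 with
  | .term t => {[.terminal t]}
  | _ => {β | ∃ c, Continues p c ∧ β = bracketPair (p, c, false)}

def bracketOutputs (p : LinProd G) (c : Option (LinProd G)) :
    List (Symbol T G.NT) → Set (List (Symbol T (DyckNT G)))
  | [.terminal t] => {[.terminal t]}
  | [.nonterminal Y] => {β | ∃ p', c = some p' ∧ p'.1.1 = Y ∧ β ∈ prodOutputs p'}
  | [.nonterminal _, .terminal _] => {bracketPair (p, c, true)}
  | _ => ∅

variable (G) in
def dyckOutputs : DyckNT G → Set (List (Symbol T (DyckNT G)))
  | none => {β | β = [] ∧ ⟨G.initial, []⟩ ∈ G.rules ∨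
      ∃ p : LinProd G, p.1.1 = G.initial ∧ β ∈ prodOutputs p}
  | some ((p, c, i), b) => bracketOutputs p c (p.1.2.bracketForm i b)

lemma mem_prodOutputs {p : LinProd G} {β : List (Symbol T (DyckNT G))} :
    β ∈ prodOutputs p ↔ (∃ t, p.1.2 = .term t ∧ β = [.terminal t]) ∨
      (∀ t, p.1.2 ≠ .term t) ∧ ∃ c, Continues p c ∧ β = bracketPair (p, c, false) := by
  unfold prodOutputs
  split <;> simp_all [-Subtype.exists]

lemma mem_bracketOutputs {p : LinProd G} {c : Option (LinProd G)} {α : List (Symbol T G.NT)}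
    {β : List (Symbol T (DyckNT G))} :
    β ∈ bracketOutputs p c α ↔ (∃ t, α = [.terminal t] ∧ β = [.terminal t]) ∨
      (∃ p', c = some p' ∧ α = [.nonterminal p'.1.1] ∧ β ∈ prodOutputs p') ∨
      (∃ Y t, α = [.nonterminal Y, .terminal t] ∧ β = bracketPair (p, c, true)) := by
  unfold bracketOutputs
  split <;> simp_all [-Subtype.exists, eq_comm]

lemma prodOutputs_finite (p : LinProd G) : (prodOutputs p).Finite := by
  unfold prodOutputs
  split
  · exact Set.finite_singleton _
  · exact (Set.finite_range fun c => bracketPair (p, c, false)).subset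
      fun _ ⟨c, _, h⟩ => ⟨c, h.symm⟩

lemma dyckOutputs_finite (ν : DyckNT G) : (dyckOutputs G ν).Finite := by
  have hunion : (⋃ p, prodOutputs (G := G) p).Finite :=
    Set.finite_iUnion fun p => prodOutputs_finite p
  rcases ν with _ | ⟨⟨p, c, i⟩, b⟩
  · refine ((Set.finite_singleton []).union hunion).subset ?_
    rintro β (⟨rfl, -⟩ | ⟨p, -, hβ⟩)
    · exact Or.inl rfl
    · exact Or.inr (Set.mem_iUnion.mpr ⟨p, hβ⟩)
  · show (bracketOutputs p c _).Finite
    unfold bracketOutputs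
    split
    · exact Set.finite_singleton _
    · exact hunion.subset fun β ⟨p', _, _, h⟩ => Set.mem_iUnion.mpr ⟨p', h⟩
    · exact Set.finite_singleton _
    · exact Set.finite_empty

lemma dyckRules_finite :
    {r : ContextFreeRule T (DyckNT G) | r.output ∈ dyckOutputs G r.input}.Finite :=
  (Set.finite_iUnion fun ν => (dyckOutputs_finite ν).image (⟨ν, ·⟩)).subset fun r hr =>
    Set.mem_iUnion.mpr ⟨r.input, r.output, hr, rfl⟩

variable (G) in
noncomputable abbrev dyckGrammar : ContextFreeGrammar T :=
  ⟨DyckNT G, none, dyckRules_finite.toFinset⟩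

lemma mem_dyckGrammar_rules {r : ContextFreeRule T (DyckNT G)} :
    r ∈ (dyckGrammar G).rules ↔ r.output ∈ dyckOutputs G r.input :=
  Set.Finite.mem_toFinset _

end DyckGrammar

section DyckNF

variable {G : ContextFreeGrammar T}

def HasTerminalBracket (κ : Key G) : Prop :=
  ∃ b t, κ.1.1.2.bracketForm κ.2.2 b = [.terminal t]

lemma prodOutputs_cases {p : LinProd G} {β : List (Symbol T (DyckNT G))}
    (h : β ∈ prodOutputs p) :
    (∃ t, β = [.terminal t]) ∨ ∃ κ, β = bracketPair κ ∧ HasTerminalBracket κ := by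
  rcases mem_prodOutputs.mp h with ⟨t, -, rfl⟩ | ⟨hs, c, -, rfl⟩
  · exact Or.inl ⟨t, rfl⟩
  · exact Or.inr ⟨(p, c, false), rfl, LinRHS.exists_bracketForm_outer_eq_terminal hs⟩

lemma dyckOutputs_cases {ν : DyckNT G} {β : List (Symbol T (DyckNT G))}
    (h : β ∈ dyckOutputs G ν) :
    (ν = none ∧ β = []) ∨ (∃ t, β = [.terminal t]) ∨
      ∃ κ, β = bracketPair κ ∧ HasTerminalBracket κ := by
  rcases ν with _ | ⟨⟨p, c, i⟩, b⟩
  · rcases h with ⟨rfl, -⟩ | ⟨p, -, hβ⟩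
    · exact Or.inl ⟨rfl, rfl⟩
    · exact Or.inr (prodOutputs_cases hβ)
  · rcases mem_bracketOutputs.mp h with ⟨t, -, rfl⟩ | ⟨p', -, -, hβ⟩ | ⟨Y, t, hα, rfl⟩
    · exact Or.inr (Or.inl ⟨t, rfl⟩)
    · exact Or.inr (prodOutputs_cases hβ)
    · exact Or.inr (Or.inr ⟨(p, c, true), rfl, false, t, (LinRHS.bracketForm_inner hα).2⟩)

lemma binary_mem_dyckOutputs {ν A B : DyckNT G}
    (h : [.nonterminal A, .nonterminal B] ∈ dyckOutputs G ν) :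
    ∃ κ, A = some (κ, true) ∧ B = some (κ, false) ∧ HasTerminalBracket κ := by
  rcases dyckOutputs_cases h with ⟨-, h⟩ | ⟨t, h⟩ | ⟨κ, h, hκ⟩
  · simp at h
  · simp at h
  · simp only [bracketPair, List.cons.injEq, Symbol.nonterminal.injEq, and_true] at h
    exact ⟨κ, h.1, h.2, hκ⟩

lemma eq_of_terminal_mem_prodOutputs {p : LinProd G} {a : T} {β : List (Symbol T (DyckNT G))}
    (ha : [.terminal a] ∈ prodOutputs p) (hβ : β ∈ prodOutputs p) : β = [.terminal a] := by
  rcases mem_prodOutputs.mp ha with ⟨t, ht, h⟩ | ⟨-, c, -, h⟩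
  · rcases mem_prodOutputs.mp hβ with ⟨t', ht', rfl⟩ | ⟨hs, -⟩
    · rw [ht] at ht'
      cases ht'
      exact h.symm
    · exact absurd ht (hs t)
  · simp [bracketPair] at h

lemma eq_of_terminal_mem_dyckOutputs {x : Key G × Bool} {a : T}
    {β : List (Symbol T (DyckNT G))} (ha : [.terminal a] ∈ dyckOutputs G (some x))
    (hβ : β ∈ dyckOutputs G (some x)) : β = [.terminal a] := by
  obtain ⟨⟨p, c, i⟩, b⟩ := x
  rcases mem_bracketOutputs.mp ha with ⟨t, hα, h⟩ | ⟨p', hc, hα, h⟩ | ⟨Y, t, hα, h⟩ <;>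
    rcases mem_bracketOutputs.mp hβ with ⟨_, hα', rfl⟩ | ⟨p'', hc', hα', h'⟩ | ⟨_, _, hα', rfl⟩ <;>
    simp_all [bracketPair]
  exact eq_of_terminal_mem_prodOutputs h h'

lemma dyckGrammar_isChomskyNF : IsChomskyNF (dyckGrammar G) := by
  refine ⟨fun r hr => ?_, fun r hr => ?_⟩ <;>
    rcases dyckOutputs_cases (mem_dyckGrammar_rules.mp hr) with ⟨hν, hβ⟩ | ⟨t, hβ⟩ | ⟨κ, hβ, -⟩
  · exact Or.inr (Or.inr ⟨hν, hβ⟩)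
  · exact Or.inr (Or.inl ⟨t, hβ⟩)
  · exact Or.inl ⟨_, _, hβ⟩
  all_goals simp [hβ, bracketPair]

lemma dyckGrammar_isLinearDyckNF : IsLinearDyckNF (dyckGrammar G) := by
  have hout : ∀ r ∈ (dyckGrammar G).rules, r.output ∈ dyckOutputs G r.input := fun r hr =>
    mem_dyckGrammar_rules.mp hr
  refine ⟨⟨dyckGrammar_isChomskyNF, ?_, ?_, ?_⟩, ?_⟩
  · intro r hr a ha hne r' hr' hin
    obtain ⟨x, hx⟩ := Option.ne_none_iff_exists'.mp hne
    have hr'out := hout r' hr'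
    rw [hin, hx] at hr'out
    have hrout := hout r hr
    rw [ha, hx] at hrout
    exact ContextFreeRule.ext hin ((eq_of_terminal_mem_dyckOutputs hrout hr'out).trans ha.symm)
  · intro r hr r' hr' A B B' ho ho'
    obtain ⟨κ, hA, -⟩ := binary_mem_dyckOutputs (ho ▸ hout r hr)
    obtain ⟨κ', -, hA', -⟩ := binary_mem_dyckOutputs (ho' ▸ hout r' hr')
    simp [hA] at hA'
  · intro r hr r' hr' A A' B B' ho ho'
    obtain ⟨κ, rfl, rfl, -⟩ := binary_mem_dyckOutputs (ho ▸ hout r hr)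
    obtain ⟨κ', rfl, rfl, -⟩ := binary_mem_dyckOutputs (ho' ▸ hout r' hr')
    simp
  · intro r hr A B ho
    obtain ⟨κ, rfl, rfl, b, t, hb⟩ := binary_mem_dyckOutputs (ho ▸ hout r hr)
    have hT : RewritesToTerminal (dyckGrammar G) (some (κ, b)) :=
      ⟨⟨some (κ, b), [.terminal t]⟩, mem_dyckGrammar_rules.mpr (by
        show [.terminal t] ∈ bracketOutputs _ _ _
        rw [hb]
        rfl), rfl, t, rfl⟩
    cases b
    · exact Or.inr hT
    · exact Or.inl hT

end DyckNF

section DyckLanguage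

variable {G : ContextFreeGrammar T}

def standsFor : DyckNT G → List (Symbol T G.NT)
  | none => [.nonterminal G.initial]
  | some ((p, _, i), b) => p.1.2.bracketForm i b

def bracketLang (ν : DyckNT G) : Language T := formLang (derivesLang G) (standsFor ν)

lemma formLang_bracketPair (κ : Key G) :
    formLang bracketLang (bracketPair κ) = formLang (derivesLang G)
      (κ.1.1.2.bracketForm κ.2.2 true ++ κ.1.1.2.bracketForm κ.2.2 false) := by
  simp [bracketPair, bracketLang, standsFor]

lemma formLang_le_of_mem_prodOutputs {p : LinProd G} {β : List (Symbol T (DyckNT G))}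
    (h : β ∈ prodOutputs p) : formLang bracketLang β ≤ derivesLang G p.1.1 := by
  have hβ : formLang bracketLang β = formLang (derivesLang G) p.1.2.toForm := by
    rcases mem_prodOutputs.mp h with ⟨t, ht, rfl⟩ | ⟨hs, c, -, rfl⟩
    · simp [ht, LinRHS.toForm]
    · rw [formLang_bracketPair, LinRHS.bracketForm_append_outer hs]
  rw [hβ]
  exact (formLang_derivesLang_anti p.derives).trans (by simp)

lemma rulesClosed_bracketLang : RulesClosed (dyckGrammar G) bracketLang := by
  rintro ⟨ν, β⟩ hr
  have h := mem_dyckGrammar_rules.mp hr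
  rcases ν with _ | ⟨⟨p, c, i⟩, b⟩
  · rcases h with ⟨rfl, hS⟩ | ⟨p, hp, hβ⟩
    · intro w hw
      obtain rfl : w = [] := hw
      simp only [bracketLang, standsFor, formLang_cons, symbolLang_nonterminal, formLang_nil,
        mul_one]
      exact ContextFreeGrammar.Produces.single ⟨_, hS, .input_output⟩
    · simpa [bracketLang, standsFor, hp] using formLang_le_of_mem_prodOutputs hβ
  · rcases mem_bracketOutputs.mp h with ⟨t, hα, rfl⟩ | ⟨p', -, hα, hβ⟩ | ⟨Y, t, hα, rfl⟩
    · simp [bracketLang, standsFor, hα]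
    · simpa [bracketLang, standsFor, hα] using formLang_le_of_mem_prodOutputs hβ
    · obtain ⟨hY, ht⟩ := LinRHS.bracketForm_inner hα
      rw [formLang_bracketPair]
      simp [bracketLang, standsFor, hα, hY, ht]

def simLang (p : LinProd G) : Language T :=
  {w | ∃ β ∈ prodOutputs p, w ∈ formLang (derivesLang (dyckGrammar G)) β}

def contLang (c : Option (LinProd G)) (Y : G.NT) : Language T :=
  {w | ∃ p, c = some p ∧ p.1.1 = Y ∧ w ∈ simLang p}

lemma mem_contLang_some {p : LinProd G} {w : List T} (h : w ∈ simLang p) :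
    w ∈ contLang (some p) p.1.1 :=
  ⟨p, rfl, rfl, h⟩

lemma mem_simLang_of_term {p : LinProd G} {t : T} (hp : p.1.2 = .term t) : [t] ∈ simLang p :=
  ⟨[.terminal t], mem_prodOutputs.mpr (Or.inl ⟨t, hp, rfl⟩), by simp⟩

lemma mem_derivesLang_of_mem_dyckOutputs {ν : DyckNT G} {β : List (Symbol T (DyckNT G))}
    {w : List T} (h : β ∈ dyckOutputs G ν) (hw : w ∈ formLang (derivesLang (dyckGrammar G)) β) :
    w ∈ derivesLang (dyckGrammar G) ν :=
  rulesClosed_derivesLang (g := dyckGrammar G) ⟨ν, β⟩ (mem_dyckGrammar_rules.mpr h) hw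

lemma symbolLang_contLang_le {p : LinProd G} {c : Option (LinProd G)} {i b : Bool}
    {s : Symbol T G.NT} (hα : p.1.2.bracketForm i b = [s]) :
    symbolLang (contLang c) s ≤ derivesLang (dyckGrammar G) (some ((p, c, i), b)) := by
  intro w hw
  have hout : ∀ β ∈ bracketOutputs p c [s], β ∈ dyckOutputs G (some ((p, c, i), b)) :=
    fun β hβ => by rwa [dyckOutputs, hα]
  cases s with
  | terminal t =>
    obtain rfl : w = [t] := hw
    exact mem_derivesLang_of_mem_dyckOutputs (hout _ rfl) (by simp)
  | nonterminal Y =>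
    obtain ⟨p', hc, rfl, β, hβ, hw⟩ := hw
    exact mem_derivesLang_of_mem_dyckOutputs (hout β ⟨p', hc, rfl, hβ⟩) hw

lemma formLang_contLang_le {p : LinProd G} {c : Option (LinProd G)} {i b : Bool}
    (hne : p.1.2.bracketForm i b ≠ []) :
    formLang (contLang c) (p.1.2.bracketForm i b) ≤
      derivesLang (dyckGrammar G) (some ((p, c, i), b)) := by
  rcases LinRHS.bracketForm_cases p.1.2 i b with h | ⟨t, h⟩ | ⟨Y, h⟩ | ⟨Y, t, h⟩
  · exact absurd h hne
  · simpa [h] using symbolLang_contLang_le h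
  · simpa [h] using symbolLang_contLang_le h
  · have hout : bracketPair (p, c, true) ∈ dyckOutputs G (some ((p, c, i), b)) := by
      rw [dyckOutputs, h]
      exact mem_bracketOutputs.mpr (Or.inr (Or.inr ⟨Y, t, rfl, rfl⟩))
    obtain ⟨hY, ht⟩ := LinRHS.bracketForm_inner h
    rw [h]
    intro w hw
    refine mem_derivesLang_of_mem_dyckOutputs hout ?_
    simp only [formLang_cons, formLang_nil, mul_one, bracketPair, symbolLang_nonterminal] at hw ⊢
    exact mul_le_mul' (symbolLang_contLang_le hY) (symbolLang_contLang_le ht) hw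

lemma formLang_contLang_le_simLang {p : LinProd G} (hs : ∀ t, p.1.2 ≠ .term t)
    {c : Option (LinProd G)} (hc : Continues p c) :
    formLang (contLang c) p.1.2.toForm ≤ simLang p := by
  intro w hw
  refine ⟨bracketPair (p, c, false), mem_prodOutputs.mpr (Or.inr ⟨hs, c, hc, rfl⟩), ?_⟩
  rw [← LinRHS.bracketForm_append_outer hs, formLang_append] at hw
  simp only [bracketPair, formLang_cons, symbolLang_nonterminal, formLang_nil, mul_one]
  exact mul_le_mul' (formLang_contLang_le (LinRHS.bracketForm_outer_ne_nil hs true))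
    (formLang_contLang_le (LinRHS.bracketForm_outer_ne_nil hs false)) hw

def dyckLang (X : G.NT) : Language T :=
  {w | w = [] ∧ ⟨X, []⟩ ∈ G.rules ∨ ∃ p : LinProd G, p.1.1 = X ∧ w ∈ simLang p}

lemma mem_dyckLang_of_target_eq_none {X : G.NT} {s : LinRHS G.NT T}
    (hp : (X, s) ∈ linProds G) (hs : s.target = none) {w : List T}
    (hw : w ∈ formLang (contLang none) s.toForm) : w ∈ dyckLang X := by
  refine Or.inr ⟨⟨_, hp⟩, rfl, ?_⟩
  cases s with
  | term t =>
    simp only [LinRHS.toForm, formLang_cons, symbolLang_terminal, formLang_nil, mul_one] at hw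
    obtain rfl : w = [t] := hw
    exact mem_simLang_of_term rfl
  | pair t₁ t₂ =>
    exact formLang_contLang_le_simLang (p := ⟨_, hp⟩) (by simp)
      (by simp [Continues, LinRHS.target]) hw
  | _ => simp [LinRHS.target] at hs

lemma mem_dyckLang_of_target_eq_some {X Y : G.NT} {s : LinRHS G.NT T}
    (hp : (X, s) ∈ linProds G) (hs : s.target = some Y) {p' : LinProd G} (hp' : p'.1.1 = Y)
    {w : List T} (hw : w ∈ formLang (contLang (some p')) s.toForm) : w ∈ dyckLang X :=
  Or.inr ⟨⟨_, hp⟩, rfl, formLang_contLang_le_simLang (p := ⟨_, hp⟩)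
    (by rintro t rfl; simp [LinRHS.target] at hs) (by simp [Continues, hs, hp']) hw⟩

lemma rulesClosed_dyckLang (hG : IsLinear G) : RulesClosed G dyckLang := by
  intro r hr w hw
  rcases hG r hr with ho | ⟨t, ho⟩ | ⟨t, Y, ho⟩ | ⟨t, Y, ho⟩ | ⟨t₁, t₂, Y, ho⟩ <;>
    rw [ho] at hw <;> simp only [formLang_cons, formLang_nil, mul_one, symbolLang_terminal,
      symbolLang_nonterminal] at hw
  · obtain rfl : w = [] := hw
    exact Or.inl ⟨rfl, by rw [← ho]; exact hr⟩
  · obtain rfl : w = [t] := hw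
    exact mem_dyckLang_of_target_eq_none (s := .term t) (mem_linProds_of_output hr ho) rfl
      (by simp [LinRHS.toForm])
  · obtain ⟨_, rfl, v, hv, rfl⟩ := Language.mem_mul.mp hw
    rcases hv with ⟨rfl, hY⟩ | ⟨p', rfl, hv⟩
    · exact mem_dyckLang_of_target_eq_none (s := .term t)
        (mem_linProds_of_erase hr (u := [.terminal t]) (v := []) ho hY rfl) rfl
        (by simp [LinRHS.toForm])
    · have hw' := Language.append_mem_mul (l := {[t]}) rfl (mem_contLang_some hv)
      exact mem_dyckLang_of_target_eq_some (s := .left t _) (mem_linProds_of_output hr ho)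
        rfl rfl (by simpa [LinRHS.toForm] using hw')
  · obtain ⟨v, hv, _, rfl, rfl⟩ := Language.mem_mul.mp hw
    rcases hv with ⟨rfl, hY⟩ | ⟨p', rfl, hv⟩
    · exact mem_dyckLang_of_target_eq_none (s := .term t)
        (mem_linProds_of_erase hr (u := []) ho hY rfl) rfl (by simp [LinRHS.toForm])
    · have hw' := Language.append_mem_mul (m := {[t]}) (mem_contLang_some hv) rfl
      exact mem_dyckLang_of_target_eq_some (s := .right _ t) (mem_linProds_of_output hr ho)
        rfl rfl (by simpa [LinRHS.toForm] using hw')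
  · obtain ⟨_, rfl, _, hvt, rfl⟩ := Language.mem_mul.mp hw
    obtain ⟨v, hv, _, rfl, rfl⟩ := Language.mem_mul.mp hvt
    rcases hv with ⟨rfl, hY⟩ | ⟨p', rfl, hv⟩
    · exact mem_dyckLang_of_target_eq_none (s := .pair t₁ t₂)
        (mem_linProds_of_erase hr (u := [.terminal t₁]) ho hY rfl) rfl
        (by simp [LinRHS.toForm, singleton_mul_singleton])
    · have hw' := Language.append_mem_mul (l := {[t₁]}) rfl
        (Language.append_mem_mul (m := {[t₂]}) (mem_contLang_some hv) rfl)
      exact mem_dyckLang_of_target_eq_some (s := .both t₁ _ t₂) (mem_linProds_of_output hr ho)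
        rfl rfl (by simpa [LinRHS.toForm] using hw')

lemma dyckGrammar_language (hG : IsLinear G) : G.language = (dyckGrammar G).language := by
  ext w
  constructor
  · intro h
    rcases derivesLang_le (g := G) dyckLang (rulesClosed_dyckLang hG) G.initial h with
      ⟨rfl, hS⟩ | ⟨p, hp, β, hβ, hw⟩
    · exact mem_derivesLang_of_mem_dyckOutputs (ν := none) (β := []) (Or.inl ⟨rfl, hS⟩) rfl
    · exact mem_derivesLang_of_mem_dyckOutputs (ν := none) (Or.inr ⟨p, hp, hβ⟩) hw
  · intro h
    have h' := derivesLang_le (g := dyckGrammar G) bracketLang rulesClosed_bracketLang none h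
    simp only [bracketLang, standsFor, formLang_cons, symbolLang_nonterminal, formLang_nil,
      mul_one] at h'
    exact h'

end DyckLanguage

/-- For each linear grammar `G` there exists a grammar in linear-Dyck normal
form generating the same language, and conversely every grammar in linear-Dyck normal form
generates a linear language. -/
theorem linear_iff_linearDyckNF :
    (∀ G : ContextFreeGrammar.{0} T, IsLinear G →
      ∃ Gk : ContextFreeGrammar.{0} T, IsLinearDyckNF Gk ∧ G.language = Gk.language) ∧
    (∀ Gk : ContextFreeGrammar.{0} T, IsLinearDyckNF Gk →
      ∃ G : ContextFreeGrammar.{0} T, IsLinear G ∧ G.language = Gk.language) :=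
  ⟨fun G hG => ⟨dyckGrammar G, dyckGrammar_isLinearDyckNF, dyckGrammar_language hG⟩,
    fun Gk hGk => ⟨linearize Gk, linearize_isLinear hGk.1.1, linearize_language hGk⟩⟩

end CS
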